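/- Suppose Ω ⊆ ℝᵖ is compact, A(ω) and q(ω) are continuous in ω, and the residual function r(x) = max_{ω∈Ω} ‖min(x, A(ω)x^{m-1} + q(ω))‖² (componentwise minimum, Euclidean norm) is level bounded (every sublevel set {x : r(x) ≤ α} is bounded). Then A(ω) is a semi-infinite R₀-tensor relative to Ω: the problem x ≥ 0, A(ω)x^{m-1} ≥ 0, xᵀA(ω)x^{m-1} = 0 for all ω ∈ Ω has only the zero solution. -/
import Mathlib


def tmul {n k : ℕ} (a : Fin n → (Fin k → Fin n) → ℝ) (x : Fin n → ℝ) (i : Fin n) : ℝ :=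
  ∑ j : Fin k → Fin n, a i j * ∏ t : Fin k, x (j t)

lemma tmul_smul {n k : ℕ} (a : Fin n → (Fin k → Fin n) → ℝ) (t : ℝ) (x : Fin n → ℝ)
    (i : Fin n) : tmul a (t • x) i = t ^ k * tmul a x i := by
  unfold tmul
  rw [Finset.mul_sum]
  refine Finset.sum_congr rfl fun j _ => ?_
  simp only [Pi.smul_apply, smul_eq_mul, Finset.prod_mul_distrib, Finset.prod_const,
    Finset.card_univ, Fintype.card_fin]
  ring

/-- If `Ω ⊆ ℝᵖ` is compact, `A(ω)` and `q(ω)` are continuous on `Ω`, and the residual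
function `r(x) = max_{ω∈Ω} ‖min(x, A(ω)x^{m-1} + q(ω))‖²` is level bounded, then `A(ω)` is a
semi-infinite `R₀`-tensor relative to `Ω`. -/
theorem semiInfinite_R0_of_levelBounded {n k p : ℕ} (hk : 1 ≤ k)
    (Ω : Set (Fin p → ℝ)) (hΩ : IsCompact Ω)
    (A : (Fin p → ℝ) → Fin n → (Fin k → Fin n) → ℝ) (q : (Fin p → ℝ) → Fin n → ℝ)
    (hA : ∀ i j, ContinuousOn (fun ω => A ω i j) Ω)
    (hq : ∀ i, ContinuousOn (fun ω => q ω i) Ω)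
    (r : (Fin n → ℝ) → ℝ)
    (hr : ∀ x, r x = sSup ((fun ω => ∑ i, min (x i) (tmul (A ω) x i + q ω i) ^ 2) '' Ω))
    (hlevel : ∀ α : ℝ, Bornology.IsBounded {x : Fin n → ℝ | r x ≤ α}) :
    ∀ x : Fin n → ℝ, (∀ i, 0 ≤ x i) →
      (∀ ω ∈ Ω, (∀ i, 0 ≤ tmul (A ω) x i) ∧ ∑ i, x i * tmul (A ω) x i = 0) →
      x = 0 := by
  intro x hx hsol
  by_contra hx0
  -- bound on ∑ q ω i ^ 2 over compact Ω
  have hg : ContinuousOn (fun ω => ∑ i, (q ω i) ^ 2) Ω := by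
    apply continuousOn_finset_sum
    intro i _
    exact (hq i).pow 2
  obtain ⟨M, hM⟩ := (hΩ.image_of_continuousOn hg).bddAbove
  set B := max M 0 with hBdef
  have hB0 : 0 ≤ B := le_max_right _ _
  -- key: r (t • x) ≤ B for all t ≥ 0
  have key : ∀ t : ℝ, 0 ≤ t → r (t • x) ≤ B := by
    intro t ht
    rw [hr]
    apply Real.sSup_le _ hB0
    rintro y ⟨ω, hω, rfl⟩
    have h1 : ∑ i, min ((t • x) i) (tmul (A ω) (t • x) i + q ω i) ^ 2 ≤ ∑ i, (q ω i) ^ 2 := by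
      apply Finset.sum_le_sum
      intro i _
      have hT : 0 ≤ tmul (A ω) x i := (hsol ω hω).1 i
      have hcomp : x i * tmul (A ω) x i = 0 :=
        (Finset.sum_eq_zero_iff_of_nonneg
          (fun j _ => mul_nonneg (hx j) ((hsol ω hω).1 j))).mp (hsol ω hω).2 i
          (Finset.mem_univ i)
      have hts : (t • x) i = t * x i := rfl
      rw [tmul_smul, hts]
      set m := min (t * x i) (t ^ k * tmul (A ω) x i + q ω i) with hm
      have htk : 0 ≤ t ^ k := pow_nonneg ht k
      have hlow : -|q ω i| ≤ m := by
        apply le_min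
        · exact le_trans (neg_nonpos_of_nonneg (abs_nonneg _)) (mul_nonneg ht (hx i))
        · have : -|q ω i| ≤ q ω i := neg_abs_le _
          nlinarith [mul_nonneg htk hT]
      have hup : m ≤ |q ω i| := by
        rcases mul_eq_zero.mp hcomp with h0 | h0
        · calc m ≤ t * x i := min_le_left _ _
            _ = 0 := by rw [h0, mul_zero]
            _ ≤ |q ω i| := abs_nonneg _
        · calc m ≤ t ^ k * tmul (A ω) x i + q ω i := min_le_right _ _
            _ = q ω i := by rw [h0, mul_zero, zero_add]
            _ ≤ |q ω i| := le_abs_self _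
      have : m ^ 2 ≤ |q ω i| ^ 2 := sq_le_sq' hlow hup
      simpa [sq_abs] using this
    have h2 : ∑ i, (q ω i) ^ 2 ≤ M := hM ⟨ω, hω, rfl⟩
    exact le_trans h1 (le_trans h2 (le_max_left _ _))
  -- contradiction with level boundedness
  obtain ⟨C, hC⟩ := isBounded_iff_forall_norm_le.mp (hlevel B)
  have hxn : 0 < ‖x‖ := norm_pos_iff.mpr hx0
  have hC0 : 0 ≤ C := le_trans (norm_nonneg ((0 : ℝ) • x)) (hC _ (key 0 le_rfl))
  set t := (C + 1) / ‖x‖ with htdef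
  have ht0 : 0 ≤ t := div_nonneg (by linarith) hxn.le
  have h := hC (t • x) (key t ht0)
  rw [norm_smul, Real.norm_eq_abs, abs_of_nonneg ht0, htdef, div_mul_cancel₀ _ hxn.ne'] at h
  linarith
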